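/- The Cambrian lattice A_{{3}}(4) fails the identity (Veg₁); specifically, with a₁ = {(1,3),(2,3)}, a₂ = {(2,3),(2,4)}, b₁ = {(3,4)}, b₂ = {(1,2)}, the left-hand side (a₁ ∨ b₁) ∧ (a₂ ∨ b₂) equals {(1,3),(1,4),(2,3),(2,4)}, which is not contained in ((a₁ ∨ b₁) ∧ (a₁ ∨ b̃₂)) ∨ ((a₂ ∨ b̃₁) ∧ (a₂ ∨ b₂)) = a₁ ∨ a₂ = {(1,3),(2,3),(2,4)}. Consequently the permutohedron P(4) does not satisfy (Veg₁). -/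

import Mathlib

/-!
In `A_{{3}}(4)` the elements `b̃ᵢ` collapse to `bᵢ`, and `(aᵢ ∨ b₁) ∧ (aᵢ ∨ b₂) = aᵢ`, so the
right side of `(Veg₁)` is the transitive set `a₁ ∪ a₂`. On the left, `(1,4)` lies in both
`a₁ ∨ b₁` (through `3`) and `a₂ ∨ b₂` (through `2`). Members of `A_U(n)` are clopen, so every
interior in the `P(4)` version acts as the identity and the same witnesses refute `(Veg₁)` there.
-/

/-- `J_n = {(i,j) : 1 ≤ i < j ≤ n}`. -/
def JnS (n : ℕ) : Set (ℕ × ℕ) := {p | 1 ≤ p.1 ∧ p.1 < p.2 ∧ p.2 ≤ n}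

/-- Transitivity of a set of pairs, viewed as a binary relation. -/
def TransSet (x : Set (ℕ × ℕ)) : Prop := ∀ i j k : ℕ, (i, j) ∈ x → (j, k) ∈ x → (i, k) ∈ x

/-- A subset of `J_n` is closed if it is transitive. -/
def ClosedIn (n : ℕ) (x : Set (ℕ × ℕ)) : Prop := x ⊆ JnS n ∧ TransSet x

/-- A subset of `J_n` is clopen if both it and its complement in `J_n` are closed. -/
def ClopenIn (n : ℕ) (x : Set (ℕ × ℕ)) : Prop := ClosedIn n x ∧ ClosedIn n (JnS n \ x)

/-- The transitive closure of a set of pairs. -/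
def clS (x : Set (ℕ × ℕ)) : Set (ℕ × ℕ) :=
  {p | Relation.TransGen (fun a b => (a, b) ∈ x) p.1 p.2}

/-- The interior: the largest open subset of `x` (the meet in `P(n)` is
`x ∧ y = int (x ∩ y)`). -/
def intS (n : ℕ) (x : Set (ℕ × ℕ)) : Set (ℕ × ℕ) := JnS n \ clS (JnS n \ x)

/-- `A_U(n)`: transitive subsets `x ⊆ J_n` such that whenever `i < j < k` and
`(i,k) ∈ x`, then `(i,j) ∈ x` if `j ∈ U` and `(j,k) ∈ x` if `j ∉ U`. -/
def AUset (n : ℕ) (U : Set ℕ) (x : Set (ℕ × ℕ)) : Prop :=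
  (x ⊆ JnS n ∧ ∀ i j k : ℕ, i < j → j < k → (i, k) ∈ x →
    ((j ∈ U → (i, j) ∈ x) ∧ (j ∉ U → (j, k) ∈ x))) ∧ TransSet x

def wa1 : Set (ℕ × ℕ) := {(1, 3), (2, 3)}
def wa2 : Set (ℕ × ℕ) := {(2, 3), (2, 4)}
def wb1 : Set (ℕ × ℕ) := {(3, 4)}
def wb2 : Set (ℕ × ℕ) := {(1, 2)}

/-- `b̃₁ = (b₁ ∨ b₂) ∧ (a₁ ∨ b₁)` in `A_{{3}}(4)`. -/
def wbt1 : Set (ℕ × ℕ) := clS (wb1 ∪ wb2) ∩ clS (wa1 ∪ wb1)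

/-- `b̃₂ = (b₁ ∨ b₂) ∧ (a₂ ∨ b₂)` in `A_{{3}}(4)`. -/
def wbt2 : Set (ℕ × ℕ) := clS (wb1 ∪ wb2) ∩ clS (wa2 ∪ wb2)

section TransitiveClosure

variable {S T : Set (ℕ × ℕ)}

theorem subset_clS (S : Set (ℕ × ℕ)) : S ⊆ clS S :=
  fun _ hp => Relation.TransGen.single hp

theorem clS_subset (hST : S ⊆ T) (hT : TransSet T) : clS S ⊆ T := by
  rintro ⟨i, k⟩ (hik : Relation.TransGen _ i k)
  induction hik with
  | single h => exact hST h
  | tail _ h ih => exact hT _ _ _ ih (hST h)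

theorem TransSet.clS_eq (hS : TransSet S) : clS S = S :=
  (clS_subset subset_rfl hS).antisymm (subset_clS S)

theorem clS_eq_of_subset_of_transSet (hST : S ⊆ T) (hT : TransSet T)
    (hTS : ∀ p ∈ T, p ∈ S ∨ ∃ j, (p.1, j) ∈ S ∧ (j, p.2) ∈ S) : clS S = T := by
  refine (clS_subset hST hT).antisymm fun p hp => ?_
  rcases hTS p hp with hpS | ⟨j, h₁, h₂⟩
  · exact subset_clS S hpS
  · exact Relation.TransGen.tail (Relation.TransGen.single h₁) h₂

end TransitiveClosure

theorem ClopenIn.intS_eq {n : ℕ} {x : Set (ℕ × ℕ)} (hx : ClopenIn n x) : intS n x = x := by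
  rw [intS, hx.2.2.clS_eq, Set.sdiff_sdiff_cancel_left hx.1.1]

-- The splitting condition at `(i,k) ∈ x` is what makes the complement in `J_n` transitive.
theorem AUset.clopenIn {n : ℕ} {U : Set ℕ} {x : Set (ℕ × ℕ)} (hx : AUset n U x) :
    ClopenIn n x := by
  obtain ⟨⟨hxJ, hsplit⟩, htrans⟩ := hx
  refine ⟨⟨hxJ, htrans⟩, Set.sdiff_subset, fun i j k ⟨hij, hij'⟩ ⟨hjk, hjk'⟩ => ⟨?_, fun hik => ?_⟩⟩
  · exact ⟨hij.1, hij.2.1.trans hjk.2.1, hjk.2.2⟩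
  · by_cases hj : j ∈ U
    · exact hij' ((hsplit i j k hij.2.1 hjk.2.1 hik).1 hj)
    · exact hjk' ((hsplit i j k hij.2.1 hjk.2.1 hik).2 hj)

theorem aUset_wa1 : AUset 4 {3} wa1 := by
  refine ⟨⟨fun ⟨i, k⟩ h => ?_, fun i j k _ _ h => ?_⟩, fun i j k h₁ h₂ => ?_⟩ <;>
    simp_all [JnS, wa1] <;> omega

theorem aUset_wa2 : AUset 4 {3} wa2 := by
  refine ⟨⟨fun ⟨i, k⟩ h => ?_, fun i j k _ _ h => ?_⟩, fun i j k h₁ h₂ => ?_⟩ <;>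
    simp_all [JnS, wa2] <;> omega

theorem aUset_wb1 : AUset 4 {3} wb1 := by
  refine ⟨⟨fun ⟨i, k⟩ h => ?_, fun i j k _ _ h => ?_⟩, fun i j k h₁ h₂ => ?_⟩ <;>
    simp_all [JnS, wb1]
  omega

theorem aUset_wb2 : AUset 4 {3} wb2 := by
  refine ⟨⟨fun ⟨i, k⟩ h => ?_, fun i j k _ _ h => ?_⟩, fun i j k h₁ h₂ => ?_⟩ <;>
    simp_all [JnS, wb2]
  omega

theorem aUset_veg₁_lhs : AUset 4 {3} {(1, 3), (1, 4), (2, 3), (2, 4)} := by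
  refine ⟨⟨fun ⟨i, k⟩ h => ?_, fun i j k _ _ h => ?_⟩, fun i j k h₁ h₂ => ?_⟩ <;>
    simp_all [JnS] <;> omega

theorem clS_wa1_union_wb1 : clS (wa1 ∪ wb1) = {(1, 3), (1, 4), (2, 3), (2, 4), (3, 4)} :=
  clS_eq_of_subset_of_transSet (fun ⟨i, k⟩ h => by simp_all [wa1, wb1]; omega)
    (fun i j k h₁ h₂ => by simp_all; omega) (by simp [wa1, wb1])

theorem clS_wa2_union_wb2 : clS (wa2 ∪ wb2) = {(1, 2), (1, 3), (1, 4), (2, 3), (2, 4)} :=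
  clS_eq_of_subset_of_transSet (fun ⟨i, k⟩ h => by simp_all [wa2, wb2]; omega)
    (fun i j k h₁ h₂ => by simp_all; omega) (by simp [wa2, wb2])

theorem transSet_wb1_union_wb2 : TransSet (wb1 ∪ wb2) := fun i j k h₁ h₂ => by
  simp_all [wb1, wb2]; omega

theorem transSet_wa1_union_wb2 : TransSet (wa1 ∪ wb2) := fun i j k h₁ h₂ => by
  simp_all [wa1, wb2]; omega

theorem transSet_wa2_union_wb1 : TransSet (wa2 ∪ wb1) := fun i j k h₁ h₂ => by
  simp_all [wa2, wb1]; omega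

theorem transSet_wa1_union_wa2 : TransSet (wa1 ∪ wa2) := fun i j k h₁ h₂ => by
  simp_all [wa1, wa2]; omega

theorem wbt1_eq : wbt1 = wb1 := by
  rw [wbt1, transSet_wb1_union_wb2.clS_eq, clS_wa1_union_wb1]
  ext ⟨i, k⟩; simp [wb1, wb2]; omega

theorem wbt2_eq : wbt2 = wb2 := by
  rw [wbt2, transSet_wb1_union_wb2.clS_eq, clS_wa2_union_wb2]
  ext ⟨i, k⟩; simp [wb1, wb2]; omega

theorem clS_wa1_union_wb1_inter_clS_wa1_union_wb2 : clS (wa1 ∪ wb1) ∩ clS (wa1 ∪ wb2) = wa1 := by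
  rw [clS_wa1_union_wb1, transSet_wa1_union_wb2.clS_eq]
  ext ⟨i, k⟩; simp [wa1, wb2]; omega

theorem clS_wa2_union_wb1_inter_clS_wa2_union_wb2 : clS (wa2 ∪ wb1) ∩ clS (wa2 ∪ wb2) = wa2 := by
  rw [transSet_wa2_union_wb1.clS_eq, clS_wa2_union_wb2]
  ext ⟨i, k⟩; simp [wa2, wb1]; omega

theorem veg₁_lhs_eq :
    clS (wa1 ∪ wb1) ∩ clS (wa2 ∪ wb2) = ({(1, 3), (1, 4), (2, 3), (2, 4)} : Set (ℕ × ℕ)) := by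
  rw [clS_wa1_union_wb1, clS_wa2_union_wb2]
  ext ⟨i, k⟩; simp; omega

theorem clS_wa1_union_wa2 : clS (wa1 ∪ wa2) = ({(1, 3), (2, 3), (2, 4)} : Set (ℕ × ℕ)) := by
  rw [transSet_wa1_union_wa2.clS_eq]
  ext ⟨i, k⟩; simp [wa1, wa2]; omega

theorem veg₁_lhs_not_subset : ¬ ({(1, 3), (1, 4), (2, 3), (2, 4)} : Set (ℕ × ℕ)) ⊆
    ({(1, 3), (2, 3), (2, 4)} : Set (ℕ × ℕ)) := fun h => by
  simpa using h (Set.mem_insert_of_mem _ (Set.mem_insert _ _))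

/-- The Cambrian lattice `A_{{3}}(4)` fails `(Veg₁)` at the witnesses
`a₁ = {(1,3),(2,3)}`, `a₂ = {(2,3),(2,4)}`, `b₁ = {(3,4)}`, `b₂ = {(1,2)}`;
consequently the permutohedron `P(4)` (with meet `int (x ∩ y)` and join
`cl (x ∪ y)` on clopen sets) does not satisfy `(Veg₁)` either. -/
theorem stmt17 :
    AUset 4 {3} wa1 ∧ AUset 4 {3} wa2 ∧ AUset 4 {3} wb1 ∧ AUset 4 {3} wb2 ∧
    clS (wa1 ∪ wb1) ∩ clS (wa2 ∪ wb2) = ({(1, 3), (1, 4), (2, 3), (2, 4)} : Set (ℕ × ℕ)) ∧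
    clS ((clS (wa1 ∪ wb1) ∩ clS (wa1 ∪ wbt2)) ∪ (clS (wa2 ∪ wbt1) ∩ clS (wa2 ∪ wb2))) =
      clS (wa1 ∪ wa2) ∧
    clS (wa1 ∪ wa2) = ({(1, 3), (2, 3), (2, 4)} : Set (ℕ × ℕ)) ∧
    ¬ ({(1, 3), (1, 4), (2, 3), (2, 4)} : Set (ℕ × ℕ)) ⊆
        ({(1, 3), (2, 3), (2, 4)} : Set (ℕ × ℕ)) ∧
    ∃ x1 x2 y1 y2 : Set (ℕ × ℕ),
      ClopenIn 4 x1 ∧ ClopenIn 4 x2 ∧ ClopenIn 4 y1 ∧ ClopenIn 4 y2 ∧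
      ¬ intS 4 (clS (x1 ∪ y1) ∩ clS (x2 ∪ y2)) ⊆
          clS ((intS 4 (clS (x1 ∪ y1) ∩
                  clS (x1 ∪ intS 4 (clS (y1 ∪ y2) ∩ clS (x2 ∪ y2))))) ∪
               (intS 4 (clS (x2 ∪ intS 4 (clS (y1 ∪ y2) ∩ clS (x1 ∪ y1))) ∩
                  clS (x2 ∪ y2)))) := by
  refine ⟨aUset_wa1, aUset_wa2, aUset_wb1, aUset_wb2, veg₁_lhs_eq, ?_, clS_wa1_union_wa2,
    veg₁_lhs_not_subset, wa1, wa2, wb1, wb2, aUset_wa1.clopenIn, aUset_wa2.clopenIn,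
    aUset_wb1.clopenIn, aUset_wb2.clopenIn, ?_⟩
  · rw [wbt1_eq, wbt2_eq, clS_wa1_union_wb1_inter_clS_wa1_union_wb2,
      clS_wa2_union_wb1_inter_clS_wa2_union_wb2]
  · rw [show clS (wb1 ∪ wb2) ∩ clS (wa2 ∪ wb2) = wb2 from wbt2_eq,
      show clS (wb1 ∪ wb2) ∩ clS (wa1 ∪ wb1) = wb1 from wbt1_eq, aUset_wb1.clopenIn.intS_eq,
      aUset_wb2.clopenIn.intS_eq, clS_wa1_union_wb1_inter_clS_wa1_union_wb2,
      clS_wa2_union_wb1_inter_clS_wa2_union_wb2, aUset_wa1.clopenIn.intS_eq,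
      aUset_wa2.clopenIn.intS_eq, veg₁_lhs_eq, aUset_veg₁_lhs.clopenIn.intS_eq, clS_wa1_union_wa2]
    exact veg₁_lhs_not_subset
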